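/- arXiv:1611.00911 — 6 statements merged into one kernel-verified Lean document; each statement's English description precedes it below -/
import Mathlib

section
/- Let W ≥ 2 be an integer and B > 1 a real number. There do not exist random variables X and Y taking values in a finite set Ω of cardinality W, with disjoint supports, such that H(X) ≥ log₂ W − log₂ B and H(Y) ≥ log₂ W − 1/B. -/
open Finset

/-- Shannon entropy (base-2 logarithms) of a probability mass function on a finite set. -/
noncomputable def shannonEntropy {Ω : Type*} [Fintype Ω] (p : Ω → ℝ) : ℝ :=
  -∑ ω, p ω * Real.logb 2 (p ω)

/-!
Since entropy is at most the logarithm of the support size, the entropy bounds force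
`|supp X| ≥ W / B` and `|supp Y| ≥ W · 2^(-1/B) > W (1 - 1/B)`. Disjoint supports in a set of
size `W` then give `W ≥ |supp X| + |supp Y| > W`.
-/

open Finset Real

lemma shannonEntropy_le_logb_card_support {Ω : Type*} [Fintype Ω] {p : Ω → ℝ}
    (h0 : ∀ ω, 0 ≤ p ω) (h1 : ∑ ω, p ω = 1) :
    shannonEntropy p ≤ logb 2 #{ω | 0 < p ω} := by
  set S : Finset Ω := {ω | 0 < p ω}
  have hpos : ∀ ω ∈ S, 0 < p ω := fun ω hω => (mem_filter.mp hω).2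
  have hS : ∀ f : ℝ → ℝ, f 0 = 0 → ∑ ω ∈ S, f (p ω) = ∑ ω, f (p ω) := fun f hf =>
    sum_filter_of_ne fun ω _ hω => (h0 ω).lt_of_ne' fun h => hω (by rw [h, hf])
  have jensen : ∑ ω ∈ S, p ω • log (p ω)⁻¹ ≤ log (∑ ω ∈ S, p ω • (p ω)⁻¹) :=
    strictConcaveOn_log_Ioi.concaveOn.le_map_sum (fun ω hω => (hpos ω hω).le)
      ((hS id rfl).trans h1) fun ω hω => inv_pos.mpr (hpos ω hω)
  have hsum : ∑ ω ∈ S, p ω • (p ω)⁻¹ = #S := by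
    simp only [card_eq_sum_ones, Nat.cast_sum, Nat.cast_one, smul_eq_mul]
    exact sum_congr rfl fun ω hω => mul_inv_cancel₀ (hpos ω hω).ne'
  have hent : shannonEntropy p = (∑ ω ∈ S, p ω • log (p ω)⁻¹) / log 2 := by
    rw [hS (fun x => x • log x⁻¹) (by simp), shannonEntropy, sum_div, ← sum_neg_distrib]
    refine sum_congr rfl fun ω _ => ?_
    simp only [smul_eq_mul, log_inv, logb]
    ring
  rw [hent, logb, ← hsum]
  exact div_le_div_of_nonneg_right jensen (log_pos one_lt_two).le

lemma mul_two_rpow_neg_le_of_logb_sub_le {W n c : ℝ} (hW : 0 < W) (hn : 0 < n)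
    (h : logb 2 W - c ≤ logb 2 n) : W * 2 ^ (-c) ≤ n := by
  calc W * 2 ^ (-c) = 2 ^ (logb 2 W - c) := by
        rw [rpow_sub two_pos, rpow_logb two_pos (by norm_num) hW, rpow_neg two_pos.le, div_eq_mul_inv]
    _ ≤ 2 ^ logb 2 n := rpow_le_rpow_of_exponent_le one_le_two h
    _ = n := rpow_logb two_pos (by norm_num) hn

lemma one_sub_lt_two_rpow_neg {x : ℝ} (hx : 0 < x) : 1 - x < 2 ^ (-x) := by
  rw [rpow_def_of_pos two_pos]
  have hexp := add_one_le_exp (log 2 * -x)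
  nlinarith [log_two_lt_d9]

lemma card_pos_of_sum_eq_one {Ω : Type*} [Fintype Ω] {p : Ω → ℝ}
    (h0 : ∀ ω, 0 ≤ p ω) (h1 : ∑ ω, p ω = 1) : 0 < #({ω | 0 < p ω} : Finset Ω) := by
  obtain ⟨ω, -, hω⟩ := exists_ne_zero_of_sum_ne_zero (h1.trans_ne one_ne_zero)
  exact card_pos.mpr ⟨ω, mem_filter.mpr ⟨mem_univ ω, (h0 ω).lt_of_ne' hω⟩⟩

theorem stmt_2_general {Ω : Type*} [Fintype Ω] (W : ℕ) (B : ℝ) (hB : 1 < B)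
    (hcard : Fintype.card Ω = W)
    (pX pY : Ω → ℝ)
    (hX0 : ∀ ω, 0 ≤ pX ω) (hX1 : ∑ ω, pX ω = 1)
    (hY0 : ∀ ω, 0 ≤ pY ω) (hY1 : ∑ ω, pY ω = 1)
    (hdisj : ∀ ω, ¬(0 < pX ω ∧ 0 < pY ω))
    (hHX : Real.logb 2 W - Real.logb 2 B ≤ shannonEntropy pX)
    (hHY : Real.logb 2 W - 1 / B ≤ shannonEntropy pY) :
    False := by
  classical
  set SX : Finset Ω := {ω | 0 < pX ω}
  set SY : Finset Ω := {ω | 0 < pY ω}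
  have hcards : (#SX + #SY : ℝ) ≤ W := by
    have hdisjS : Disjoint SX SY := disjoint_filter.mpr fun ω _ hx hy => hdisj ω ⟨hx, hy⟩
    rw [← hcard, ← card_univ]
    exact_mod_cast (card_union_of_disjoint hdisjS).symm.trans_le (card_le_univ _)
  have hXpos : (0 : ℝ) < #SX := by exact_mod_cast card_pos_of_sum_eq_one hX0 hX1
  have hYpos : (0 : ℝ) < #SY := by exact_mod_cast card_pos_of_sum_eq_one hY0 hY1
  have hWpos : (0 : ℝ) < W := hXpos.trans_le (by linarith)
  have hBpos : 0 < B := one_pos.trans hB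
  have hSX : W / B ≤ #SX := by
    have := mul_two_rpow_neg_le_of_logb_sub_le hWpos hXpos
      (hHX.trans (shannonEntropy_le_logb_card_support hX0 hX1))
    rwa [rpow_neg two_pos.le, rpow_logb two_pos (by norm_num) hBpos, ← div_eq_mul_inv] at this
  have hSY : W * (2 : ℝ) ^ (-(1 / B)) ≤ #SY := mul_two_rpow_neg_le_of_logb_sub_le hWpos hYpos
    (hHY.trans (shannonEntropy_le_logb_card_support hY0 hY1))
  have hlt := mul_lt_mul_of_pos_left (one_sub_lt_two_rpow_neg (one_div_pos.mpr hBpos)) hWpos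
  have hsplit : W / B + W * (1 - 1 / B) = (W : ℝ) := by ring
  linarith

theorem stmt_2 {Ω : Type*} [Fintype Ω] (W : ℕ) (B : ℝ) (hW : 2 ≤ W) (hB : 1 < B)
    (hcard : Fintype.card Ω = W)
    (pX pY : Ω → ℝ)
    (hX0 : ∀ ω, 0 ≤ pX ω) (hX1 : ∑ ω, pX ω = 1)
    (hY0 : ∀ ω, 0 ≤ pY ω) (hY1 : ∑ ω, pY ω = 1)
    (hdisj : ∀ ω, ¬(0 < pX ω ∧ 0 < pY ω))
    (hHX : Real.logb 2 W - Real.logb 2 B ≤ shannonEntropy pX)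
    (hHY : Real.logb 2 W - 1 / B ≤ shannonEntropy pY) :
    False :=
  stmt_2_general W B hB hcard pX pY hX0 hX1 hY0 hY1 hdisj hHX hHY
end

section
/- Let V be a positive integer and let X be a random variable taking values in a finite set Ω of cardinality V with distribution D (so D(x) = P[X = x]). If the Shannon entropy with base-2 logarithms satisfies H(X) ≥ log₂ V − 1/18, then the set W_X = { x ∈ Ω : D(x) ≥ 1/(2V) } has cardinality |W_X| ≥ (2/3)·V. -/
open Finset

/-!
With `V = |Ω|` and `klFun r = r log r + 1 - r ≥ 0`, the sum `∑ₓ klFun (V p(x))` equals `V` times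
the Kullback–Leibler divergence of `p` from the uniform distribution, i.e. `V (log V - H(p) log 2)`,
so an entropy deficit of `1/18` bits bounds it by `V log 2 / 18`. Since `klFun` decreases on
`[0, 1]`, each point with `V p(x) ≤ 1/2` contributes at least `klFun (1/2) = (1 - log 2) / 2`,
so there are at most `V log 2 / (9 (1 - log 2)) ≤ V / 3` such points, because `log 2 ≤ 3/4`.
-/

open Real InformationTheory

lemma antitoneOn_klFun : AntitoneOn klFun (Set.Icc 0 1) := by
  refine antitoneOn_of_deriv_nonpos (convex_Icc 0 1) continuous_klFun.continuousOn
    (fun x hx => ?_) (fun x hx => ?_) <;> rw [interior_Icc] at hx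
  · exact (hasDerivAt_klFun hx.1.ne').differentiableAt.differentiableWithinAt
  · rw [deriv_klFun]
    exact log_nonpos hx.1.le hx.2.le

lemma klFun_half : klFun (1 / 2) = (1 - log 2) / 2 := by
  rw [klFun_apply, one_div, log_inv]
  ring

lemma card_filter_le_mul_klFun_le_sum {Ω : Type*} [Fintype Ω] {r : Ω → ℝ} (hr : ∀ x, 0 ≤ r x)
    {t : ℝ} (ht : t ≤ 1) [DecidablePred fun x => r x ≤ t] :
    #{x | r x ≤ t} * klFun t ≤ ∑ x, klFun (r x) :=
  calc #{x | r x ≤ t} * klFun t ≤ ∑ x ∈ {x | r x ≤ t}, klFun (r x) := by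
        rw [← nsmul_eq_mul]
        refine card_nsmul_le_sum _ _ _ fun x hx => ?_
        have hxt := (mem_filter.mp hx).2
        exact antitoneOn_klFun ⟨hr x, hxt.trans ht⟩ ⟨(hr x).trans hxt, ht⟩ hxt
    _ ≤ ∑ x, klFun (r x) :=
        sum_le_sum_of_subset_of_nonneg (subset_univ _) fun x _ _ => klFun_nonneg (hr x)

lemma log_two_mul_shannonEntropy {Ω : Type*} [Fintype Ω] (p : Ω → ℝ) :
    log 2 * shannonEntropy p = -∑ x, p x * log (p x) := by
  have hlog2 : log 2 ≠ 0 := (log_pos one_lt_two).ne'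
  simp only [shannonEntropy, logb, mul_neg, mul_sum]
  congr! 2 with x
  field_simp

lemma sum_klFun_card_mul {Ω : Type*} [Fintype Ω] {p : Ω → ℝ} (hp : ∑ x, p x = 1) :
    ∑ x, klFun (Fintype.card Ω * p x) =
      Fintype.card Ω * (log (Fintype.card Ω) - log 2 * shannonEntropy p) := by
  obtain ⟨x₀, -, -⟩ := exists_ne_zero_of_sum_ne_zero (hp ▸ one_ne_zero)
  have hV : (Fintype.card Ω : ℝ) ≠ 0 :=
    Nat.cast_ne_zero.mpr (Fintype.card_pos_iff.mpr ⟨x₀⟩).ne'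
  have hterm (x : Ω) : klFun (Fintype.card Ω * p x) =
      Fintype.card Ω * (p x * log (Fintype.card Ω) + p x * log (p x)) + 1
        - Fintype.card Ω * p x := by
    rcases eq_or_ne (p x) 0 with h | h
    · simp [klFun_apply, h]
    · rw [klFun_apply, log_mul hV h]
      ring
  simp only [hterm, log_two_mul_shannonEntropy, sum_sub_distrib, sum_add_distrib, ← mul_sum,
    ← sum_mul, hp, sum_const, card_univ, nsmul_eq_mul]
  ring

lemma sum_klFun_card_mul_le {Ω : Type*} [Fintype Ω] {p : Ω → ℝ} (hp : ∑ x, p x = 1) {ε : ℝ}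
    (hH : logb 2 (Fintype.card Ω) - ε ≤ shannonEntropy p) :
    ∑ x, klFun (Fintype.card Ω * p x) ≤ Fintype.card Ω * (log 2 * ε) := by
  have hlog2 : 0 < log 2 := log_pos one_lt_two
  rw [logb, div_sub' hlog2.ne', div_le_iff₀ hlog2] at hH
  rw [sum_klFun_card_mul hp]
  gcongr
  linarith

open scoped Classical in
theorem stmt_3 {Ω : Type*} [Fintype Ω] (V : ℕ) (hV : 0 < V)
    (hcard : Fintype.card Ω = V)
    (D : Ω → ℝ) (hD0 : ∀ x, 0 ≤ D x) (hD1 : ∑ x, D x = 1)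
    (hH : Real.logb 2 V - 1 / 18 ≤ shannonEntropy D) :
    (2 / 3 : ℝ) * V ≤ ((Finset.univ.filter (fun x : Ω => 1 / (2 * (V : ℝ)) ≤ D x)).card : ℝ) := by
  have hVpos : (0 : ℝ) < V := by exact_mod_cast hV
  have hKL := sum_klFun_card_mul_le hD1 (hcard ▸ hH)
  rw [hcard] at hKL
  have hlight := card_filter_le_mul_klFun_le_sum (fun x => mul_nonneg hVpos.le (hD0 x))
    (t := 1 / 2) (by norm_num)
  rw [klFun_half] at hlight
  have hlight_card : (#{x | (V : ℝ) * D x ≤ 1 / 2} : ℝ) ≤ V / 3 := by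
    have hlog2_lt : log 2 < 3 / 4 := log_two_lt_d9.trans (by norm_num)
    nlinarith [mul_le_mul_of_nonneg_left hlog2_lt.le
      (Nat.cast_nonneg (α := ℝ) #{x | (V : ℝ) * D x ≤ 1 / 2})]
  have hbelow_le_light : (#{x | ¬1 / (2 * (V : ℝ)) ≤ D x} : ℝ) ≤ #{x | (V : ℝ) * D x ≤ 1 / 2} := by
    refine Nat.cast_le.mpr (card_le_card (monotone_filter_right _ fun x _ hx => ?_))
    rw [not_le, lt_div_iff₀ (by positivity)] at hx
    linarith
  have hsplit : (#{x | 1 / (2 * (V : ℝ)) ≤ D x} : ℝ) + #{x | ¬1 / (2 * (V : ℝ)) ≤ D x} = V := by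
    exact_mod_cast (card_filter_add_card_filter_not _).trans (card_univ.trans hcard)
  linarith
end

section
/- Let L be a positive integer, let X be a random variable taking values in a finite set Ω of cardinality L, and let S ⊆ Ω be a subset with |S| ≤ L/4. If P[X ∈ S] ≥ 1/3, then the Shannon entropy with base-2 logarithms satisfies H(X) ≤ log₂ L − (1/3)·log₂(256/243); moreover (1/3)·log₂(256/243) > 1/40, so in particular H(X) < log₂ L − 1/40. -/
/-!
Gibbs' inequality `∑ p log p ≥ ∑ p log r`, valid for any weights `r > 0` of total mass at most 1,
is applied with `r = θ / (σ |Ω|)` on `S` and `r = (1 - θ) / ((1 - σ) |Ω|)` off `S`: for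
`|S| ≤ σ |Ω|` and `σ ≤ θ` these weights have mass at most 1, and the resulting bound
`log |Ω| - (q log (θ/σ) + (1 - q) log ((1 - θ)/(1 - σ)))` decreases in `q = P(S)`, so for
`q ≥ θ` the entropy is at most `log |Ω| - KL(θ ‖ σ)`. For `θ = 1/3`, `σ = 1/4` this divergence
is `(1/3) log (256/243)`.
-/

open Finset

open Real

lemma shannonEntropy_eq_sum_negMulLog_div {Ω : Type*} [Fintype Ω] (p : Ω → ℝ) :
    shannonEntropy p = (∑ ω, negMulLog (p ω)) / log 2 := by
  simp only [shannonEntropy, logb, negMulLog, sum_div, ← sum_neg_distrib]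
  exact sum_congr rfl fun ω _ => by ring

noncomputable def bernoulliKL (θ σ : ℝ) : ℝ :=
  θ * log (θ / σ) + (1 - θ) * log ((1 - θ) / (1 - σ))

lemma negMulLog_le_neg_mul_log_add_sub {p r : ℝ} (hp : 0 ≤ p) (hr : 0 < r) :
    negMulLog p ≤ -(p * log r) + (r - p) := by
  rcases hp.eq_or_lt with rfl | hp
  · simpa using hr.le
  have h := mul_le_mul_of_nonneg_left (log_le_sub_one_of_pos (div_pos hr hp)) hp.le
  rw [log_div hr.ne' hp.ne', mul_sub_one, mul_div_cancel₀ _ hp.ne'] at h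
  rw [negMulLog]
  linarith

theorem sum_negMulLog_le_neg_sum_mul_log {ι : Type*} (s : Finset ι) {p r : ι → ℝ}
    (hp : ∀ i ∈ s, 0 ≤ p i) (hr : ∀ i ∈ s, 0 < r i) (hsum : ∑ i ∈ s, r i ≤ ∑ i ∈ s, p i) :
    ∑ i ∈ s, negMulLog (p i) ≤ -∑ i ∈ s, p i * log (r i) :=
  calc ∑ i ∈ s, negMulLog (p i) ≤ ∑ i ∈ s, (-(p i * log (r i)) + (r i - p i)) :=
        sum_le_sum fun i hi => negMulLog_le_neg_mul_log_add_sub (hp i hi) (hr i hi)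
    _ ≤ -∑ i ∈ s, p i * log (r i) := by
        rw [sum_add_distrib, sum_sub_distrib, sum_neg_distrib]
        linarith

lemma sum_mul_ite_mem {Ω : Type*} [Fintype Ω] [DecidableEq Ω] (S : Finset Ω) (g : Ω → ℝ)
    (a b : ℝ) :
    ∑ x, g x * (if x ∈ S then a else b) = (∑ x ∈ S, g x) * a + (∑ x ∈ Sᶜ, g x) * b := by
  rw [← sum_add_sum_compl S, sum_mul, sum_mul]
  congr 1 <;> refine sum_congr rfl fun x hx => ?_
  · rw [if_pos hx]
  · rw [if_neg (mem_compl.mp hx)]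

theorem sum_negMulLog_le_log_card_sub_bernoulliKL {Ω : Type*} [Fintype Ω] {p : Ω → ℝ}
    (hp0 : ∀ x, 0 ≤ p x) (hp1 : ∑ x, p x = 1) {S : Finset Ω} {σ θ : ℝ}
    (hσ : 0 < σ) (hσθ : σ ≤ θ) (hθ : θ < 1)
    (hS : (#S : ℝ) ≤ σ * Fintype.card Ω) (hpS : θ ≤ ∑ x ∈ S, p x) :
    ∑ x, negMulLog (p x) ≤ log (Fintype.card Ω) - bernoulliKL θ σ := by
  classical
  have : Nonempty Ω := by
    by_contra h
    simp [not_nonempty_iff.mp h] at hp1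
  set n : ℝ := (Fintype.card Ω : ℝ)
  set q := ∑ x ∈ S, p x
  have hn : 0 < n := by simp [n, Fintype.card_pos]
  have hpSc : ∑ x ∈ Sᶜ, p x = 1 - q := by rw [← hp1, ← sum_add_sum_compl S]; ring
  have hcardSc : (#Sᶜ : ℝ) = n - #S := by
    rw [card_compl, Nat.cast_sub (card_le_univ S)]
  have hθ0 : 0 < θ := hσ.trans_le hσθ
  have hθ1 : 0 < 1 - θ := sub_pos.mpr hθ
  have hσ1 : 0 < 1 - σ := sub_pos.mpr (hσθ.trans_lt hθ)
  set a := θ / σ / n with ha_def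
  set b := (1 - θ) / (1 - σ) / n with hb_def
  have ha : 0 < a := by positivity
  have hb : 0 < b := by positivity
  have hba : b ≤ a := by
    rw [ha_def, hb_def, div_le_div_iff_of_pos_right hn, div_le_div_iff₀ hσ1 hσ]
    nlinarith
  have hmass : ∑ x, (if x ∈ S then a else b) ≤ ∑ x, p x := by
    have := sum_mul_ite_mem S (fun _ => (1 : ℝ)) a b
    simp only [one_mul, sum_const, nsmul_eq_mul, mul_one, hcardSc] at this
    have haS : a * (σ * n) = θ := by rw [ha_def]; field_simp
    have hbSc : b * ((1 - σ) * n) = 1 - θ := by rw [hb_def]; field_simp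
    rw [this, hp1]
    nlinarith [mul_le_mul_of_nonneg_left hS (sub_nonneg.mpr hba)]
  have hcross : ∑ x, p x * log (if x ∈ S then a else b) = q * log a + (1 - q) * log b := by
    simp only [apply_ite log]
    rw [sum_mul_ite_mem, hpSc]
  calc ∑ x, negMulLog (p x) ≤ -∑ x, p x * log (if x ∈ S then a else b) :=
        sum_negMulLog_le_neg_sum_mul_log _ (fun x _ => hp0 x)
          (fun x _ => by split_ifs <;> assumption) hmass
    _ = -log b - q * (log a - log b) := by rw [hcross]; ring
    _ ≤ -log b - θ * (log a - log b) := by gcongr; exact sub_nonneg.mpr (log_le_log hb hba)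
    _ = log n - bernoulliKL θ σ := by
        rw [log_div (by positivity) hn.ne', log_div (by positivity) hn.ne', bernoulliKL]
        ring

lemma bernoulliKL_third_quarter : bernoulliKL (1 / 3) (1 / 4) = 1 / 3 * log (256 / 243) := by
  rw [bernoulliKL, show (256 / 243 : ℝ) = 4 / 3 * (8 / 9) ^ 2 by norm_num,
    log_mul (by norm_num) (by norm_num), log_pow]
  norm_num
  ring

lemma one_div_forty_lt_logb_two_256_div_243 : (1 / 40 : ℝ) < 1 / 3 * logb 2 (256 / 243) := by
  have h : log (2 ^ 3) < log ((256 / 243) ^ 40) := log_lt_log (by norm_num) (by norm_num)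
  rw [log_pow, log_pow] at h
  rw [logb, ← mul_div_assoc, lt_div_iff₀ (log_pos one_lt_two)]
  push_cast at h
  linarith

theorem stmt_9_general {Ω : Type*} [Fintype Ω] (L : ℕ)
    (hcard : Fintype.card Ω = L)
    (D : Ω → ℝ) (hD0 : ∀ x, 0 ≤ D x) (hD1 : ∑ x, D x = 1)
    (S : Finset Ω) (hS : (S.card : ℝ) ≤ (L : ℝ) / 4)
    -- P[X ∈ S] ≥ 1/3
    (hPS : (1 : ℝ) / 3 ≤ ∑ x ∈ S, D x) :
    shannonEntropy D ≤ Real.logb 2 L - (1 / 3) * Real.logb 2 (256 / 243) ∧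
    (1 / 40 : ℝ) < (1 / 3) * Real.logb 2 (256 / 243) ∧
    shannonEntropy D < Real.logb 2 L - 1 / 40 := by
  have hnats := sum_negMulLog_le_log_card_sub_bernoulliKL hD0 hD1 (σ := 1 / 4)
    (by norm_num) (by norm_num) (by norm_num) (by rw [hcard]; linarith) hPS
  rw [bernoulliKL_third_quarter, hcard] at hnats
  have hbits : shannonEntropy D ≤ logb 2 L - 1 / 3 * logb 2 (256 / 243) := by
    rw [shannonEntropy_eq_sum_negMulLog_div, logb, logb, ← mul_div_assoc, ← sub_div]
    exact div_le_div_of_nonneg_right hnats (log_nonneg one_le_two)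
  have hgap := one_div_forty_lt_logb_two_256_div_243
  exact ⟨hbits, hgap, by linarith⟩

theorem stmt_9 {Ω : Type*} [Fintype Ω] [DecidableEq Ω] (L : ℕ) (hL : 0 < L)
    (hcard : Fintype.card Ω = L)
    (D : Ω → ℝ) (hD0 : ∀ x, 0 ≤ D x) (hD1 : ∑ x, D x = 1)
    (S : Finset Ω) (hS : (S.card : ℝ) ≤ (L : ℝ) / 4)
    -- P[X ∈ S] ≥ 1/3
    (hPS : (1 : ℝ) / 3 ≤ ∑ x ∈ S, D x) :
    shannonEntropy D ≤ Real.logb 2 L - (1 / 3) * Real.logb 2 (256 / 243) ∧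
    (1 / 40 : ℝ) < (1 / 3) * Real.logb 2 (256 / 243) ∧
    shannonEntropy D < Real.logb 2 L - 1 / 40 :=
  stmt_9_general L hcard D hD0 hD1 S hS hPS
end

section
/- Let (l_n) and (m_n) be sequences of positive integers with l_n → ∞ and m_n → ∞, and set U_n = l_n · m_n. Then m_n · C(U_n − m_n, l_n − 1) / C(U_n, l_n) → e^{−1} as n → ∞, where C(n, r) denotes the binomial coefficient. Equivalently, if Y_n is a uniformly random l_n-element subset of a set of size U_n partitioned into l_n buckets of size m_n, the probability that a fixed bucket contains exactly one element of Y_n tends to e^{−1}. -/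
open Filter Finset

lemma choose_cast_eq (n k : ℕ) :
    (Nat.choose n k : ℝ) = (∏ i ∈ Finset.range k, ((n - i : ℕ) : ℝ)) / (Nat.factorial k : ℝ) := by
  have h : (Nat.factorial k : ℝ) * (Nat.choose n k : ℝ)
      = ∏ i ∈ Finset.range k, ((n - i : ℕ) : ℝ) := by
    rw [← Nat.cast_mul, ← Nat.descFactorial_eq_factorial_mul_choose,
      Nat.descFactorial_eq_prod_range]
    push_cast
    rfl
  rw [eq_div_iff (by exact_mod_cast Nat.factorial_ne_zero k)]
  linarith [h]

lemma prod_ident (a b : ℕ) (ha : 2 ≤ a) (hb : 2 ≤ b) :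
    ((b : ℝ) * (Nat.choose (a * b - b) (a - 1) : ℝ)) / (Nat.choose (a * b) a : ℝ)
      = ∏ i ∈ Finset.range (a - 1), (((a * b - b - i : ℕ) : ℝ) / ((a * b - 1 - i : ℕ) : ℝ)) := by
  obtain ⟨c, rfl⟩ : ∃ c, a = c + 1 := ⟨a - 1, by omega⟩
  simp only [Nat.add_sub_cancel]
  set N := (c + 1) * b with hN
  have h1 : (Nat.choose (N - b) c : ℝ)
      = (∏ i ∈ Finset.range c, ((N - b - i : ℕ) : ℝ)) / (Nat.factorial c : ℝ) := by
    rw [choose_cast_eq]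
  have h2 : (Nat.choose N (c + 1) : ℝ)
      = ((N : ℝ) * ∏ i ∈ Finset.range c, ((N - 1 - i : ℕ) : ℝ)) / (Nat.factorial (c + 1) : ℝ) := by
    rw [choose_cast_eq]
    congr 1
    rw [Finset.prod_range_succ', Nat.sub_zero, mul_comm]
    congr 1
    refine Finset.prod_congr rfl fun i _ => ?_
    congr 1
    omega
  have hden : ∀ i ∈ Finset.range c, (0:ℝ) < ((N - 1 - i : ℕ) : ℝ) := by
    intro i hi
    simp only [Finset.mem_range] at hi
    have h : 0 < N - 1 - i := by
      have hNc : c + 1 ≤ N := Nat.le_mul_of_pos_right _ (by omega)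
      omega
    exact_mod_cast h
  have hP2 : (0:ℝ) < ∏ i ∈ Finset.range c, ((N - 1 - i : ℕ) : ℝ) :=
    Finset.prod_pos hden
  rw [h1, h2, Finset.prod_div_distrib]
  have hfac : (Nat.factorial (c + 1) : ℝ) = (c + 1) * (Nat.factorial c : ℝ) := by
    rw [Nat.factorial_succ]; push_cast; ring
  have hNr : (N : ℝ) = (c + 1) * b := by push_cast [hN]; ring
  have hc : (Nat.factorial c : ℝ) ≠ 0 := by exact_mod_cast Nat.factorial_ne_zero c
  have hb0 : (0:ℝ) < b := by exact_mod_cast (by omega : 0 < b)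
  have hN0 : (N:ℝ) ≠ 0 := by rw [hNr]; positivity
  rw [hfac]
  field_simp
  rw [hNr]
  ring

lemma aux_pow (u : ℕ → ℝ) (k : ℕ → ℕ)
    (hu0 : ∀ᶠ n in atTop, 0 < u n) (hu1 : ∀ᶠ n in atTop, u n < 1)
    (hu : Tendsto u atTop (nhds 0))
    (hku : Tendsto (fun n => (k n : ℝ) * u n) atTop (nhds 1)) :
    Tendsto (fun n => (1 - u n) ^ (k n)) atTop (nhds (Real.exp (-1))) := by
  have hd : HasDerivAt Real.log 1 1 := by simpa using Real.hasDerivAt_log one_ne_zero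
  have hsl := hasDerivAt_iff_tendsto_slope.mp hd
  have hy : Tendsto (fun n => 1 - u n) atTop (nhdsWithin 1 {(1:ℝ)}ᶜ) := by
    apply tendsto_nhdsWithin_of_tendsto_nhds_of_eventually_within
    · simpa using (tendsto_const_nhds.sub hu)
    · filter_upwards [hu0] with n hn
      simp only [Set.mem_compl_iff, Set.mem_singleton_iff]
      intro h
      nlinarith
  have hcomp : Tendsto (fun n => Real.log (1 - u n) / (-(u n))) atTop (nhds 1) := by
    have h := hsl.comp hy
    refine Tendsto.congr' ?_ h
    filter_upwards [hu0] with n hn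
    have hne : (1 - u n) - 1 = -(u n) := by ring
    simp only [Function.comp_apply, slope_def_field, Real.log_one, sub_zero, hne]
  have hlog : Tendsto (fun n => (k n : ℝ) * Real.log (1 - u n)) atTop (nhds (-1)) := by
    have h := (hku.mul hcomp).neg
    rw [one_mul] at h
    refine Tendsto.congr' ?_ h
    filter_upwards [hu0] with n hn
    have hune : u n ≠ 0 := ne_of_gt hn
    field_simp
  have hexp := (Real.continuous_exp.tendsto (-1)).comp hlog
  refine Tendsto.congr' ?_ hexp
  filter_upwards [hu1] with n hn
  have hpos : 0 < 1 - u n := by linarith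
  simp only [Function.comp_apply]
  rw [← Real.log_pow, Real.exp_log (by positivity)]

lemma nat_cast_facts (a b i : ℕ) (ha : 2 ≤ a) (hb : 2 ≤ b) (hi : i < a - 1) :
    b + i ≤ a * b ∧ 1 + i ≤ a * b := by
  obtain ⟨c, rfl⟩ : ∃ c, a = c + 1 := ⟨a - 1, by omega⟩
  have hcb : c ≤ c * b := Nat.le_mul_of_pos_right _ (by omega)
  have : (c + 1) * b = c * b + b := by ring
  omega

lemma factor_bounds (a b i : ℝ) (ha : 2 ≤ a) (hb : 2 ≤ b) (hi0 : 0 ≤ i) (hi : i ≤ a - 2) :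
    1 - (b-1)/(a*(b-1)+1) ≤ (a*b - b - i)/(a*b - 1 - i)
      ∧ (a*b - b - i)/(a*b - 1 - i) ≤ 1 - (b-1)/(a*b-1) := by
  have hd0 : 0 < a*(b-1)+1 := by nlinarith
  have hd1 : 0 < a*b - 1 - i := by nlinarith
  have hd2 : 0 < a*b - 1 := by nlinarith
  have he : (a*b - b - i)/(a*b - 1 - i) = 1 - (b-1)/(a*b - 1 - i) := by
    field_simp
    ring
  rw [he]
  constructor
  · have : (b-1)/(a*b - 1 - i) ≤ (b-1)/(a*(b-1)+1) := by
      gcongr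
      · linarith
      · nlinarith
    linarith
  · have : (b-1)/(a*b - 1) ≤ (b-1)/(a*b - 1 - i) := by
      apply div_le_div_of_nonneg_left (by linarith) hd1 (by linarith)
    linarith

theorem stmt_12 (l m : ℕ → ℕ) (hlpos : ∀ n, 0 < l n) (hmpos : ∀ n, 0 < m n)
    (hl : Tendsto l atTop atTop) (hm : Tendsto m atTop atTop) :
    Tendsto (fun n =>
        ((m n : ℝ) * (Nat.choose (l n * m n - m n) (l n - 1) : ℝ))
          / (Nat.choose (l n * m n) (l n) : ℝ))
      atTop (nhds (Real.exp (-1))) := by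
  have hev : ∀ᶠ n in atTop, 2 ≤ l n ∧ 2 ≤ m n :=
    (hl.eventually_ge_atTop 2).and (hm.eventually_ge_atTop 2)
  have hA : Tendsto (fun n => (l n : ℝ)) atTop atTop :=
    tendsto_natCast_atTop_atTop.comp hl
  have hB : Tendsto (fun n => (m n : ℝ)) atTop atTop :=
    tendsto_natCast_atTop_atTop.comp hm
  have hAinv : Tendsto (fun n => (l n : ℝ)⁻¹) atTop (nhds 0) := hA.inv_tendsto_atTop
  have hBinv : Tendsto (fun n => (m n : ℝ)⁻¹) atTop (nhds 0) := hB.inv_tendsto_atTop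
  have hA1 : Tendsto (fun n => (l n : ℝ) - 1) atTop atTop :=
    tendsto_atTop_add_const_right _ (-1) hA
  have hA1inv : Tendsto (fun n => ((l n : ℝ) - 1)⁻¹) atTop (nhds 0) := hA1.inv_tendsto_atTop
  -- squeeze-to-zero helper
  have sq0 : ∀ (f g : ℕ → ℝ), (∀ᶠ n in atTop, 0 ≤ f n) → (∀ᶠ n in atTop, f n ≤ g n) →
      Tendsto g atTop (nhds 0) → Tendsto f atTop (nhds 0) := by
    intro f g h0 h1 hg
    exact tendsto_of_tendsto_of_tendsto_of_le_of_le' tendsto_const_nhds hg h0 h1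
  set u1 : ℕ → ℝ := fun n => ((m n : ℝ) - 1) / ((l n : ℝ) * ((m n : ℝ) - 1) + 1) with hu1def
  set u2 : ℕ → ℝ := fun n => ((m n : ℝ) - 1) / ((l n : ℝ) * (m n : ℝ) - 1) with hu2def
  -- basic per-n facts
  have hfacts : ∀ᶠ n in atTop, (0 < u1 n ∧ u1 n < 1 ∧ u1 n ≤ (l n : ℝ)⁻¹)
      ∧ (0 < u2 n ∧ u2 n < 1 ∧ u2 n ≤ ((l n : ℝ) - 1)⁻¹) := by
    filter_upwards [hev] with n ⟨ha, hb⟩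
    have ha' : (2:ℝ) ≤ (l n : ℝ) := by exact_mod_cast ha
    have hb' : (2:ℝ) ≤ (m n : ℝ) := by exact_mod_cast hb
    set a := (l n : ℝ); set b := (m n : ℝ)
    have hd1 : 0 < a * (b - 1) + 1 := by nlinarith
    have hd2 : 0 < a * b - 1 := by nlinarith
    refine ⟨⟨div_pos (by linarith) hd1, ?_, ?_⟩, div_pos (by linarith) hd2, ?_, ?_⟩
    · rw [div_lt_one hd1]; nlinarith
    · rw [inv_eq_one_div, div_le_div_iff₀ hd1 (by linarith)]; nlinarith
    · rw [div_lt_one hd2]; nlinarith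
    · rw [inv_eq_one_div, div_le_div_iff₀ hd2 (by linarith)]; nlinarith
  have hu1pos : ∀ᶠ n in atTop, 0 < u1 n := hfacts.mono fun n h => h.1.1
  have hu1lt : ∀ᶠ n in atTop, u1 n < 1 := hfacts.mono fun n h => h.1.2.1
  have hu2pos : ∀ᶠ n in atTop, 0 < u2 n := hfacts.mono fun n h => h.2.1
  have hu2lt : ∀ᶠ n in atTop, u2 n < 1 := hfacts.mono fun n h => h.2.2.1
  have hu1lim : Tendsto u1 atTop (nhds 0) :=
    sq0 _ _ (hu1pos.mono fun n h => h.le) (hfacts.mono fun n h => h.1.2.2) hAinv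
  have hu2lim : Tendsto u2 atTop (nhds 0) :=
    sq0 _ _ (hu2pos.mono fun n h => h.le) (hfacts.mono fun n h => h.2.2.2) hA1inv
  -- k * u limits
  have hku1 : Tendsto (fun n => ((l n - 1 : ℕ) : ℝ) * u1 n) atTop (nhds 1) := by
    have hsmall : Tendsto (fun n => (m n : ℝ) / ((l n : ℝ) * ((m n : ℝ) - 1) + 1))
        atTop (nhds 0) := by
      apply sq0 _ (fun n => 2 * (l n : ℝ)⁻¹)
      · filter_upwards [hev] with n ⟨ha, hb⟩
        have ha' : (2:ℝ) ≤ (l n : ℝ) := by exact_mod_cast ha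
        have hb' : (2:ℝ) ≤ (m n : ℝ) := by exact_mod_cast hb
        have hd1 : 0 < (l n : ℝ) * ((m n : ℝ) - 1) + 1 := by nlinarith
        positivity
      · filter_upwards [hev] with n ⟨ha, hb⟩
        have ha' : (2:ℝ) ≤ (l n : ℝ) := by exact_mod_cast ha
        have hb' : (2:ℝ) ≤ (m n : ℝ) := by exact_mod_cast hb
        have hd1 : 0 < (l n : ℝ) * ((m n : ℝ) - 1) + 1 := by nlinarith
        rw [show (2:ℝ) * (l n : ℝ)⁻¹ = 2 / (l n : ℝ) by ring,
          div_le_div_iff₀ hd1 (by linarith)]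
        nlinarith
      · simpa using hAinv.const_mul 2
    have h := (tendsto_const_nhds : Tendsto (fun _ : ℕ => (1:ℝ)) atTop (nhds 1)).sub hsmall
    rw [sub_zero] at h
    refine Tendsto.congr' ?_ h
    filter_upwards [hev] with n ⟨ha, hb⟩
    have ha' : (2:ℝ) ≤ (l n : ℝ) := by exact_mod_cast ha
    have hb' : (2:ℝ) ≤ (m n : ℝ) := by exact_mod_cast hb
    have hd1 : 0 < (l n : ℝ) * ((m n : ℝ) - 1) + 1 := by nlinarith
    have hcast : ((l n - 1 : ℕ) : ℝ) = (l n : ℝ) - 1 := by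
      rw [Nat.cast_sub (by omega)]; simp
    rw [hu1def]
    simp only [hcast]
    field_simp
    ring
  have hku2 : Tendsto (fun n => ((l n - 1 : ℕ) : ℝ) * u2 n) atTop (nhds 1) := by
    have hsmall : Tendsto (fun n => ((l n : ℝ) + (m n : ℝ) - 2) / ((l n : ℝ) * (m n : ℝ) - 1))
        atTop (nhds 0) := by
      apply sq0 _ (fun n => 2 * ((l n : ℝ) + (m n : ℝ)) / ((l n : ℝ) * (m n : ℝ)))
      · filter_upwards [hev] with n ⟨ha, hb⟩
        have ha' : (2:ℝ) ≤ (l n : ℝ) := by exact_mod_cast ha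
        have hb' : (2:ℝ) ≤ (m n : ℝ) := by exact_mod_cast hb
        have hd2 : 0 < (l n : ℝ) * (m n : ℝ) - 1 := by nlinarith
        apply div_nonneg (by linarith) hd2.le
      · filter_upwards [hev] with n ⟨ha, hb⟩
        have ha' : (2:ℝ) ≤ (l n : ℝ) := by exact_mod_cast ha
        have hb' : (2:ℝ) ≤ (m n : ℝ) := by exact_mod_cast hb
        have hd2 : 0 < (l n : ℝ) * (m n : ℝ) - 1 := by nlinarith
        have hab : 0 < (l n : ℝ) * (m n : ℝ) := by nlinarith
        rw [div_le_div_iff₀ hd2 hab]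
        nlinarith [mul_nonneg (mul_nonneg (by linarith : (0:ℝ) ≤ (l n:ℝ)) (by linarith : (0:ℝ) ≤ (m n:ℝ))) (by linarith : (0:ℝ) ≤ (l n:ℝ) - 2),
          mul_nonneg (mul_nonneg (by linarith : (0:ℝ) ≤ (l n:ℝ)) (by linarith : (0:ℝ) ≤ (m n:ℝ))) (by linarith : (0:ℝ) ≤ (m n:ℝ) - 2),
          mul_nonneg (by linarith : (0:ℝ) ≤ (l n:ℝ)) (by linarith : (0:ℝ) ≤ (m n:ℝ) - 2),
          mul_nonneg (by linarith : (0:ℝ) ≤ (m n:ℝ)) (by linarith : (0:ℝ) ≤ (l n:ℝ) - 2)]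
      · have h := (hAinv.const_mul 2).add (hBinv.const_mul 2)
        rw [show (2:ℝ) * 0 + 2 * 0 = 0 by ring] at h
        refine Tendsto.congr' ?_ h
        filter_upwards [hev] with n ⟨ha, hb⟩
        have ha0 : (l n : ℝ) ≠ 0 := by positivity
        have hb0 : (m n : ℝ) ≠ 0 := by
          have : 0 < m n := by omega
          positivity
        field_simp
        ring
    have h := (tendsto_const_nhds : Tendsto (fun _ : ℕ => (1:ℝ)) atTop (nhds 1)).sub hsmall
    rw [sub_zero] at h
    refine Tendsto.congr' ?_ h
    filter_upwards [hev] with n ⟨ha, hb⟩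
    have ha' : (2:ℝ) ≤ (l n : ℝ) := by exact_mod_cast ha
    have hb' : (2:ℝ) ≤ (m n : ℝ) := by exact_mod_cast hb
    have hd2 : 0 < (l n : ℝ) * (m n : ℝ) - 1 := by nlinarith
    have hcast : ((l n - 1 : ℕ) : ℝ) = (l n : ℝ) - 1 := by
      rw [Nat.cast_sub (by omega)]; simp
    rw [hu2def]
    simp only [hcast]
    field_simp
    ring
  have hg := aux_pow u1 (fun n => l n - 1) hu1pos hu1lt hu1lim hku1
  have hh := aux_pow u2 (fun n => l n - 1) hu2pos hu2lt hu2lim hku2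
  refine tendsto_of_tendsto_of_tendsto_of_le_of_le' hg hh ?_ ?_
  · filter_upwards [hev, hu1lt] with n ⟨ha, hb⟩ h1
    have ha' : (2:ℝ) ≤ (l n : ℝ) := by exact_mod_cast ha
    have hb' : (2:ℝ) ≤ (m n : ℝ) := by exact_mod_cast hb
    rw [prod_ident (l n) (m n) ha hb]
    calc (1 - u1 n) ^ (l n - 1)
        = ∏ _i ∈ Finset.range (l n - 1), (1 - u1 n) := by
          rw [Finset.prod_const, Finset.card_range]
      _ ≤ _ := by
          apply Finset.prod_le_prod (fun i _ => by linarith)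
          intro i hi
          simp only [Finset.mem_range] at hi
          obtain ⟨hbi, h1i⟩ := nat_cast_facts (l n) (m n) i ha hb hi
          have e1 : ((l n * m n - m n - i : ℕ) : ℝ)
              = (l n : ℝ) * (m n : ℝ) - (m n : ℝ) - i := by
            rw [show l n * m n - m n - i = l n * m n - (m n + i) by omega,
              Nat.cast_sub hbi]
            push_cast; ring
          have e2 : ((l n * m n - 1 - i : ℕ) : ℝ)
              = (l n : ℝ) * (m n : ℝ) - 1 - i := by
            rw [show l n * m n - 1 - i = l n * m n - (1 + i) by omega,
              Nat.cast_sub h1i]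
            push_cast; ring
          have hi' : (i : ℝ) ≤ (l n : ℝ) - 2 := by
            have : (i : ℝ) + 2 ≤ (l n : ℝ) := by exact_mod_cast (by omega : i + 2 ≤ l n)
            linarith
          rw [e1, e2]
          exact (factor_bounds (l n : ℝ) (m n : ℝ) (i : ℝ) ha' hb' (by positivity) hi').1
  · filter_upwards [hev, hu2lt] with n ⟨ha, hb⟩ h2
    have ha' : (2:ℝ) ≤ (l n : ℝ) := by exact_mod_cast ha
    have hb' : (2:ℝ) ≤ (m n : ℝ) := by exact_mod_cast hb
    rw [prod_ident (l n) (m n) ha hb]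
    calc (∏ i ∈ Finset.range (l n - 1),
            (((l n * m n - m n - i : ℕ) : ℝ) / ((l n * m n - 1 - i : ℕ) : ℝ)))
        ≤ ∏ _i ∈ Finset.range (l n - 1), (1 - u2 n) := by
          apply Finset.prod_le_prod (fun i _ => by positivity)
          intro i hi
          simp only [Finset.mem_range] at hi
          obtain ⟨hbi, h1i⟩ := nat_cast_facts (l n) (m n) i ha hb hi
          have e1 : ((l n * m n - m n - i : ℕ) : ℝ)
              = (l n : ℝ) * (m n : ℝ) - (m n : ℝ) - i := by
            rw [show l n * m n - m n - i = l n * m n - (m n + i) by omega,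
              Nat.cast_sub hbi]
            push_cast; ring
          have e2 : ((l n * m n - 1 - i : ℕ) : ℝ)
              = (l n : ℝ) * (m n : ℝ) - 1 - i := by
            rw [show l n * m n - 1 - i = l n * m n - (1 + i) by omega,
              Nat.cast_sub h1i]
            push_cast; ring
          have hi' : (i : ℝ) ≤ (l n : ℝ) - 2 := by
            have : (i : ℝ) + 2 ≤ (l n : ℝ) := by exact_mod_cast (by omega : i + 2 ≤ l n)
            linarith
          rw [e1, e2]
          exact (factor_bounds (l n : ℝ) (m n : ℝ) (i : ℝ) ha' hb' (by positivity) hi').2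
      _ = (1 - u2 n) ^ (l n - 1) := by rw [Finset.prod_const, Finset.card_range]
end

section
/- Let (l_n) and (m_n) be sequences of positive integers with l_n → ∞ and m_n → ∞, and set U_n = l_n · m_n. Then m_n² · C(U_n − 2m_n, l_n − 2) / C(U_n, l_n) → e^{−2} as n → ∞, where C(n, r) denotes the binomial coefficient. Equivalently, if Y_n is a uniformly random l_n-element subset of a set of size U_n partitioned into l_n buckets of size m_n, the probability that two fixed distinct buckets each contain exactly one element of Y_n tends to e^{−2}. -/
open Filter Finset Topology

/-! The identity `C(lm, l) C(l, 2) = C(lm, 2) C(lm - 2, l - 2)` splits the quantity into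
`m (l - 1) / (lm - 1)`, which lies between `1 - 1/l` and `1`, and the ratio
`C(lm - 2m, l - 2) / C(lm - 2, l - 2) = ∏_{i < l - 2} (lm - 2m - i) / (lm - 2 - i)`.
For `a ≤ b` the factors `(a - i) / (b - i)` decrease in `i`, so the ratio lies between
`(1 - 2/l) ^ (l - 2)` and `(1 - 2(1 - 1/m)/l) ^ (l - 2) ≤ exp (-2 (1 - 1/m) (1 - 2/l))`,
and both bounds tend to `e⁻²`. -/

theorem Nat.cast_descFactorial_eq_prod_range {n k : ℕ} (h : k ≤ n) :
    (n.descFactorial k : ℝ) = ∏ i ∈ range k, ((n : ℝ) - i) := by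
  rw [Nat.descFactorial_eq_prod_range, Nat.cast_prod]
  exact prod_congr rfl fun i hi => Nat.cast_sub ((mem_range.mp hi).le.trans h)

theorem Nat.cast_choose_div_cast_choose {a b k : ℕ} (ha : k ≤ a) (hb : k ≤ b) :
    (a.choose k : ℝ) / b.choose k = ∏ i ∈ range k, ((a : ℝ) - i) / (b - i) := by
  have hk : (k.factorial : ℝ) ≠ 0 := by positivity
  rw [prod_div_distrib, ← Nat.cast_descFactorial_eq_prod_range ha,
    ← Nat.cast_descFactorial_eq_prod_range hb, Nat.descFactorial_eq_factorial_mul_choose,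
    Nat.descFactorial_eq_factorial_mul_choose, Nat.cast_mul, Nat.cast_mul, mul_div_mul_left _ _ hk]

theorem div_sub_le_div_sub {a b i j : ℝ} (hab : a ≤ b) (hij : i ≤ j) (hja : j < a) :
    (a - j) / (b - j) ≤ (a - i) / (b - i) := by
  rw [div_le_div_iff₀ (by linarith) (by linarith)]
  nlinarith

theorem pow_le_cast_choose_div_cast_choose {a b k : ℕ} (hka : k ≤ a) (hab : a ≤ b) :
    (((a : ℝ) - k + 1) / (b - k + 1)) ^ k ≤ (a.choose k : ℝ) / b.choose k := by
  have hab' : (a : ℝ) ≤ b := by exact_mod_cast hab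
  have hka' : (k : ℝ) ≤ a := by exact_mod_cast hka
  rw [Nat.cast_choose_div_cast_choose hka (hka.trans hab), pow_eq_prod_const]
  refine prod_le_prod (fun _ _ => div_nonneg (by linarith) (by linarith)) fun i hi => ?_
  have hik : (i : ℝ) + 1 ≤ k := by exact_mod_cast mem_range.mp hi
  have h := div_sub_le_div_sub hab' (j := k - 1) (by linarith) (by linarith)
  rwa [← sub_add, ← sub_add] at h

theorem cast_choose_div_cast_choose_le_pow {a b k : ℕ} (hka : k ≤ a) (hab : a ≤ b) :
    (a.choose k : ℝ) / b.choose k ≤ ((a : ℝ) / b) ^ k := by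
  have hab' : (a : ℝ) ≤ b := by exact_mod_cast hab
  have hka' : (k : ℝ) ≤ a := by exact_mod_cast hka
  rw [Nat.cast_choose_div_cast_choose hka (hka.trans hab), pow_eq_prod_const]
  refine prod_le_prod (fun i hi => ?_) fun i hi => ?_
  all_goals have hik : (i : ℝ) + 1 ≤ k := by exact_mod_cast mem_range.mp hi
  · exact div_nonneg (by linarith) (by linarith)
  · simpa using div_sub_le_div_sub hab' (i := 0) (j := i) (by positivity) (by linarith)

theorem tendsto_one_add_div_pow_sub_exp (x : ℝ) (j : ℕ) :
    Tendsto (fun n : ℕ => (1 + x / n) ^ (n - j)) atTop (𝓝 (Real.exp x)) := by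
  have hbase : Tendsto (fun n : ℕ => 1 + x / n) atTop (𝓝 1) := by
    simpa using (tendsto_const_div_atTop_nhds_zero_nat x).const_add 1
  have hquot := (Real.tendsto_one_add_div_pow_exp x).div (hbase.pow j) (by simp)
  rw [one_pow, div_one] at hquot
  refine hquot.congr' ?_
  filter_upwards [hbase.eventually_ne one_ne_zero, eventually_ge_atTop j] with n hne hjn
  rw [Pi.div_apply, pow_sub₀ _ hne hjn, div_eq_mul_inv]

noncomputable def probTwoSingletonBuckets (l m : ℕ) : ℝ :=
  (m : ℝ) ^ 2 * (l * m - 2 * m).choose (l - 2) / (l * m).choose l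

section

variable {l m : ℕ}

theorem probTwoSingletonBuckets_eq (hl : 2 ≤ l) (hm : 1 ≤ m) :
    probTwoSingletonBuckets l m = m * (l - 1) / (l * m - 1) *
      ((l * m - 2 * m).choose (l - 2) / (l * m - 2).choose (l - 2) : ℝ) := by
  have hlm : l ≤ l * m := Nat.le_mul_of_pos_right l hm
  have hC : ((l * m).choose l : ℝ) ≠ 0 := by exact_mod_cast (Nat.choose_pos hlm).ne'
  have hD : ((l * m - 2).choose (l - 2) : ℝ) ≠ 0 := by
    exact_mod_cast (Nat.choose_pos (by omega)).ne'
  have hlr : (2 : ℝ) ≤ l := by exact_mod_cast hl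
  have hmr : (1 : ℝ) ≤ m := by exact_mod_cast hm
  have hid : ((l * m).choose l * l.choose 2 : ℝ) =
      (l * m).choose 2 * (l * m - 2).choose (l - 2) := by
    exact_mod_cast Nat.choose_mul hl
  rw [Nat.cast_choose_two, Nat.cast_choose_two, Nat.cast_mul] at hid
  have hid' : ((l * m).choose l : ℝ) * (l - 1) = m * (l * m - 1) * (l * m - 2).choose (l - 2) :=
    mul_left_cancel₀ (by positivity : (l : ℝ) ≠ 0) (by linear_combination 2 * hid)
  unfold probTwoSingletonBuckets
  rw [div_mul_div_comm, div_eq_div_iff hC (mul_ne_zero (by nlinarith) hD)]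
  linear_combination -(m : ℝ) * ((l * m - 2 * m).choose (l - 2) : ℝ) * hid'

theorem one_sub_inv_le_mul_sub_one_div_mul_sub_one (hl : 2 ≤ l) (hm : 1 ≤ m) :
    1 - 1 / (l : ℝ) ≤ m * (l - 1) / (l * m - 1) := by
  have hlr : (2 : ℝ) ≤ l := by exact_mod_cast hl
  have hmr : (1 : ℝ) ≤ m := by exact_mod_cast hm
  rw [one_sub_div (by positivity), div_le_div_iff₀ (by positivity) (by nlinarith)]
  nlinarith

theorem mul_sub_one_div_mul_sub_one_le_one (hl : 2 ≤ l) (hm : 1 ≤ m) :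
    (m : ℝ) * (l - 1) / (l * m - 1) ≤ 1 := by
  have hlr : (2 : ℝ) ≤ l := by exact_mod_cast hl
  have hmr : (1 : ℝ) ≤ m := by exact_mod_cast hm
  rw [div_le_one (by nlinarith)]
  nlinarith

theorem sub_two_le_mul_sub_two_mul (hm : 1 ≤ m) : l - 2 ≤ l * m - 2 * m := by
  rw [← Nat.sub_mul]; exact Nat.le_mul_of_pos_right _ hm

theorem mul_sub_two_mul_le_mul_sub_two (hl : 2 ≤ l) (hm : 1 ≤ m) :
    l * m - 2 * m ≤ l * m - 2 := by
  have := Nat.mul_le_mul_right m hl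
  omega

theorem cast_mul_sub_two_mul (hl : 2 ≤ l) : ((l * m - 2 * m : ℕ) : ℝ) = (l - 2) * m := by
  rw [Nat.cast_sub (Nat.mul_le_mul_right m hl)]; push_cast; ring

theorem cast_mul_sub_two (hl : 2 ≤ l) (hm : 1 ≤ m) :
    ((l * m - 2 : ℕ) : ℝ) = l * m - 2 := by
  rw [Nat.cast_sub (hl.trans (Nat.le_mul_of_pos_right l hm))]; push_cast; ring

theorem one_sub_two_div_pow_le_choose_div_choose (hl : 2 ≤ l) (hm : 1 ≤ m) :
    (1 - 2 / l : ℝ) ^ (l - 2) ≤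
      ((l * m - 2 * m).choose (l - 2) / (l * m - 2).choose (l - 2) : ℝ) := by
  have hlr : (2 : ℝ) ≤ l := by exact_mod_cast hl
  have hmr : (1 : ℝ) ≤ m := by exact_mod_cast hm
  refine le_trans (pow_le_pow_left₀ ?_ ?_ _) (pow_le_cast_choose_div_cast_choose
    (sub_two_le_mul_sub_two_mul hm) (mul_sub_two_mul_le_mul_sub_two hl hm))
  · exact sub_nonneg.2 (div_le_one_of_le₀ hlr (by positivity))
  · rw [cast_mul_sub_two_mul hl, cast_mul_sub_two hl hm, Nat.cast_sub hl, Nat.cast_two,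
      one_sub_div (by positivity), div_le_div_iff₀ (by positivity) (by nlinarith)]
    nlinarith

theorem choose_div_choose_le_exp (hl : 2 ≤ l) (hm : 1 ≤ m) :
    ((l * m - 2 * m).choose (l - 2) / (l * m - 2).choose (l - 2) : ℝ) ≤
      Real.exp (-2 * (1 - 1 / m) * (1 - 2 / l)) := by
  have hlr : (2 : ℝ) ≤ l := by exact_mod_cast hl
  have hmr : (1 : ℝ) ≤ m := by exact_mod_cast hm
  have hlm : (l : ℝ) ≤ l * m := le_mul_of_one_le_right (by positivity) hmr
  have hratio : ((l * m - 2 * m : ℕ) : ℝ) / (l * m - 2 : ℕ) ≤ -2 * (1 - 1 / m) / l + 1 := by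
    have hm' : 0 ≤ 1 - 1 / (m : ℝ) := sub_nonneg.2 (div_le_one_of_le₀ hmr (by positivity))
    rw [cast_mul_sub_two_mul hl, cast_mul_sub_two hl hm]
    refine div_le_of_le_mul₀ (by linarith) ?_ ?_
    · field_simp
      nlinarith
    · field_simp
      nlinarith
  calc _ ≤ (((l * m - 2 * m : ℕ) : ℝ) / (l * m - 2 : ℕ)) ^ (l - 2) :=
        cast_choose_div_cast_choose_le_pow (sub_two_le_mul_sub_two_mul hm)
          (mul_sub_two_mul_le_mul_sub_two hl hm)
    _ ≤ Real.exp (-2 * (1 - 1 / m) / l) ^ (l - 2) :=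
        pow_le_pow_left₀ (by positivity) (hratio.trans (Real.add_one_le_exp _)) _
    _ = Real.exp (-2 * (1 - 1 / m) * (1 - 2 / l)) := by
        rw [← Real.exp_nat_mul, Nat.cast_sub hl]
        congr 1
        field_simp
        push_cast
        ring

theorem le_probTwoSingletonBuckets (hl : 2 ≤ l) (hm : 1 ≤ m) :
    (1 - 1 / l) * (1 - 2 / l) ^ (l - 2) ≤ probTwoSingletonBuckets l m := by
  have hlr : (2 : ℝ) ≤ l := by exact_mod_cast hl
  rw [probTwoSingletonBuckets_eq hl hm]
  refine mul_le_mul (one_sub_inv_le_mul_sub_one_div_mul_sub_one hl hm)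
    (one_sub_two_div_pow_le_choose_div_choose hl hm) ?_ ?_
  · exact pow_nonneg (sub_nonneg.2 (div_le_one_of_le₀ hlr (by positivity))) _
  · exact (sub_nonneg.2 (div_le_one_of_le₀ (by linarith) (by positivity))).trans
      (one_sub_inv_le_mul_sub_one_div_mul_sub_one hl hm)

theorem probTwoSingletonBuckets_le (hl : 2 ≤ l) (hm : 1 ≤ m) :
    probTwoSingletonBuckets l m ≤ Real.exp (-2 * (1 - 1 / m) * (1 - 2 / l)) := by
  rw [probTwoSingletonBuckets_eq hl hm, ← one_mul (Real.exp _)]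
  exact mul_le_mul (mul_sub_one_div_mul_sub_one_le_one hl hm) (choose_div_choose_le_exp hl hm)
    (by positivity) zero_le_one

end

theorem stmt_13_general (l m : ℕ → ℕ)
    (hl : Tendsto l atTop atTop) (hm : Tendsto m atTop atTop) :
    Tendsto (fun n =>
        ((m n : ℝ) ^ 2 * (Nat.choose (l n * m n - 2 * m n) (l n - 2) : ℝ))
          / (Nat.choose (l n * m n) (l n) : ℝ))
      atTop (nhds (Real.exp (-2))) := by
  have hone_sub (c : ℝ) : Tendsto (fun n : ℕ => 1 - c / n) atTop (𝓝 1) := by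
    simpa using (tendsto_const_div_atTop_nhds_zero_nat c).const_sub 1
  have hlower : Tendsto (fun n : ℕ => (1 - 1 / (n : ℝ)) * (1 - 2 / n) ^ (n - 2)) atTop
      (𝓝 (Real.exp (-2))) := by
    simpa [sub_eq_add_neg, neg_div] using (hone_sub 1).mul (tendsto_one_add_div_pow_sub_exp (-2) 2)
  have hupper : Tendsto (fun n => Real.exp (-2 * (1 - 1 / m n) * (1 - 2 / l n))) atTop
      (𝓝 (Real.exp (-2))) := by
    simpa using (((hone_sub 1).comp hm).const_mul (-2)).mul ((hone_sub 2).comp hl) |>.rexp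
  refine tendsto_of_tendsto_of_tendsto_of_le_of_le' (hlower.comp hl) hupper ?_ ?_ <;>
  filter_upwards [hl.eventually_ge_atTop 2, hm.eventually_ge_atTop 1] with n hln hmn
  · exact le_probTwoSingletonBuckets hln hmn
  · exact probTwoSingletonBuckets_le hln hmn

theorem stmt_13 (l m : ℕ → ℕ) (hlpos : ∀ n, 0 < l n) (hmpos : ∀ n, 0 < m n)
    (hl : Tendsto l atTop atTop) (hm : Tendsto m atTop atTop) :
    Tendsto (fun n =>
        ((m n : ℝ) ^ 2 * (Nat.choose (l n * m n - 2 * m n) (l n - 2) : ℝ))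
          / (Nat.choose (l n * m n) (l n) : ℝ))
      atTop (nhds (Real.exp (-2))) :=
  stmt_13_general l m hl hm
end

section
/- (Observation 1.) Let (l_n) and (m_n) be sequences of positive integers with l_n → ∞ and m_n → ∞, set U_n = l_n · m_n, partition a set of cardinality U_n into l_n buckets of cardinality m_n each, and let Y_n be a uniformly random l_n-element subset. Then the probability that at least l_n/3 of the buckets contain exactly one element of Y_n tends to 1 as n → ∞. -/
/-!
Let `S Y` be the number of buckets that a uniformly random `L`-subset `Y` of an `L * M`-set meets
in exactly one point, and let `p_L = M·C(LM - M, L - 1) / C(LM, L)` (`singleBucketProb L M`) be the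
probability that a fixed bucket is such a bucket. Double counting gives `E S = L p_L` and
`E S² = L p_L + L (L - 1) p_L p_{L-1}`. Telescoping the binomial coefficients writes `p_L` as
`∏_{t < M - 1} (1 - (L - 1) / (LM - 1 - t))`, whose factors lie between `1 - 1/M` and
`1 - (L - 1) / (LM)`. Hence `p_L ≥ (1 - 1/M)^(M-1) ≥ e⁻¹ > 11/30` and `p_{L-1} - p_L ≤ 1/(L - 1)`,
so `Var S ≤ 2L`. As `E S ≥ 11L/30`, Chebyshev's inequality bounds the proportion of `Y` with
`S Y < L/3` by `1800 / L`.
-/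

open Finset Filter

/-- The number of buckets (from the family `B`) containing exactly one element of `Y`. -/
noncomputable def numSingleBuckets {Ω : Type*} [DecidableEq Ω] {L : ℕ}
    (B : Fin L → Finset Ω) (Y : Finset Ω) : ℕ :=
  (Finset.univ.filter (fun i : Fin L => (Y ∩ B i).card = 1)).card

open Function

section Counting

variable {Ω : Type*} [DecidableEq Ω]

theorem numSingleBuckets_eq_sum {L : ℕ} (B : Fin L → Finset Ω) (Y : Finset Ω) :
    numSingleBuckets B Y = ∑ i, if #(Y ∩ B i) = 1 then 1 else 0 := by
  rw [numSingleBuckets, card_filter]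

theorem union_inter_eq_left_of_disjoint {R₁ R₂ B₁ B₂ : Finset Ω} (hB : Disjoint B₁ B₂)
    (h₁ : R₁ ⊆ B₁) (h₂ : R₂ ⊆ B₂) : (R₁ ∪ R₂) ∩ B₁ = R₁ := by
  rw [union_inter_distrib_right, inter_eq_left.mpr h₁,
    disjoint_iff_inter_eq_empty.mp (disjoint_of_subset_left h₂ hB.symm), union_empty]

variable [Fintype Ω]

theorem card_filter_inter_eq {D R : Finset Ω} (hRD : R ⊆ D) {k : ℕ} (hk : #R ≤ k) :
    #{Y ∈ powersetCard k univ | Y ∩ D = R} = (Fintype.card Ω - #D).choose (k - #R) := by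
  rw [← card_compl, ← card_powersetCard]
  refine card_nbij' (· \ D) (R ∪ ·) (fun Y hY => ?_) (fun Z hZ => ?_) (fun Y hY => ?_)
    (fun Z hZ => ?_) <;>
    simp only [coe_filter, mem_powersetCard, subset_univ, true_and, Set.mem_ofPred_eq,
      mem_coe] at *
  · refine ⟨fun x hx => by simp_all, ?_⟩
    rw [← hY.2, ← hY.1, ← card_sdiff_add_card_inter Y D]
    omega
  · have hZD : Disjoint Z D := subset_compl_iff_disjoint_right.mp hZ.1
    refine ⟨?_, ?_⟩
    · rw [card_union_of_disjoint (disjoint_of_subset_left hRD hZD.symm)]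
      omega
    · rw [union_inter_distrib_right, inter_eq_left.mpr hRD,
        disjoint_iff_inter_eq_empty.mp hZD, union_empty]
  · rw [← hY.2, union_comm, sdiff_union_inter]
  · rw [union_sdiff_distrib, sdiff_eq_empty_iff_subset.mpr hRD,
      sdiff_eq_self_of_disjoint (subset_compl_iff_disjoint_right.mp hZ.1), empty_union]

theorem card_filter_inter_mem {D : Finset Ω} {𝓡 : Finset (Finset Ω)} {r k : ℕ}
    (h𝓡 : ∀ R ∈ 𝓡, R ⊆ D ∧ #R = r) (hrk : r ≤ k) :
    #{Y ∈ powersetCard k univ | Y ∩ D ∈ 𝓡} = #𝓡 * (Fintype.card Ω - #D).choose (k - r) := by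
  rw [card_eq_sum_card_fiberwise (f := (· ∩ D)) (t := 𝓡)
    (s := {Y ∈ powersetCard k univ | Y ∩ D ∈ 𝓡}) (fun Y hY => (mem_filter.mp hY).2),
    ← smul_eq_mul, ← sum_const]
  refine sum_congr rfl fun R hR => ?_
  obtain ⟨hRD, rfl⟩ := h𝓡 R hR
  rw [filter_filter, ← card_filter_inter_eq hRD hrk]
  congr 1
  exact filter_congr fun Y _ => ⟨And.right, fun h => ⟨h ▸ hR, h⟩⟩

theorem card_filter_card_inter_eq_one (B : Finset Ω) {k : ℕ} (hk : 1 ≤ k) :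
    #{Y ∈ powersetCard k univ | #(Y ∩ B) = 1} = #B * (Fintype.card Ω - #B).choose (k - 1) := by
  have h := card_filter_inter_mem (D := B) (𝓡 := powersetCard 1 B) (k := k)
    (fun R hR => mem_powersetCard.mp hR) hk
  rw [card_powersetCard, Nat.choose_one_right] at h
  simpa only [mem_powersetCard, inter_subset_right, true_and] using h

theorem card_filter_card_inter_eq_one_and_eq_one {B₁ B₂ : Finset Ω} (hB : Disjoint B₁ B₂)
    {k : ℕ} (hk : 2 ≤ k) :
    #{Y ∈ powersetCard k univ | #(Y ∩ B₁) = 1 ∧ #(Y ∩ B₂) = 1}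
      = #B₁ * #B₂ * (Fintype.card Ω - (#B₁ + #B₂)).choose (k - 2) := by
  have hsplit : ∀ {R₁ R₂ : Finset Ω}, R₁ ⊆ B₁ → R₂ ⊆ B₂ →
      (R₁ ∪ R₂) ∩ B₁ = R₁ ∧ (R₁ ∪ R₂) ∩ B₂ = R₂ := fun {R₁ R₂} h₁ h₂ =>
    ⟨union_inter_eq_left_of_disjoint hB h₁ h₂,
      union_comm R₂ R₁ ▸ union_inter_eq_left_of_disjoint hB.symm h₂ h₁⟩
  set 𝓡 := (powersetCard 1 B₁ ×ˢ powersetCard 1 B₂).image (fun R => R.1 ∪ R.2)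
  have h𝓡 : ∀ R ∈ 𝓡, R ⊆ B₁ ∪ B₂ ∧ #R = 2 := by
    simp only [𝓡, mem_image, mem_product, mem_powersetCard]
    rintro _ ⟨⟨R₁, R₂⟩, ⟨⟨h₁, c₁⟩, ⟨h₂, c₂⟩⟩, rfl⟩
    refine ⟨union_subset_union h₁ h₂, ?_⟩
    rw [card_union_of_disjoint (disjoint_of_subset_left h₁ (disjoint_of_subset_right h₂ hB)),
      c₁, c₂]
  have hcard : #𝓡 = #B₁ * #B₂ := by
    rw [card_image_of_injOn, card_product, card_powersetCard, card_powersetCard,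
      Nat.choose_one_right, Nat.choose_one_right]
    rintro ⟨R₁, R₂⟩ hR ⟨R₁', R₂'⟩ hR' h
    simp only [coe_product, Set.mem_prod, mem_coe, mem_powersetCard] at hR hR' h
    have e := hsplit hR.1.1 hR.2.1
    have e' := hsplit hR'.1.1 hR'.2.1
    rw [h] at e
    exact Prod.ext (e.1.symm.trans e'.1) (e.2.symm.trans e'.2)
  rw [← hcard, ← card_union_of_disjoint hB, ← card_filter_inter_mem h𝓡 hk]
  congr 1
  refine filter_congr fun Y _ => ?_
  simp only [𝓡, mem_image, mem_product, mem_powersetCard, Prod.exists]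
  constructor
  · rintro ⟨h₁, h₂⟩
    exact ⟨_, _, ⟨⟨inter_subset_right, h₁⟩, inter_subset_right, h₂⟩,
      (inter_union_distrib_left _ _ _).symm⟩
  · rintro ⟨R₁, R₂, ⟨⟨h₁, c₁⟩, h₂, c₂⟩, e⟩
    obtain ⟨e₁, e₂⟩ := hsplit h₁ h₂
    rw [e, inter_assoc, union_inter_cancel_left] at e₁
    rw [e, inter_assoc, union_inter_cancel_right] at e₂
    rw [e₁, e₂]
    exact ⟨c₁, c₂⟩

variable {L M k : ℕ} {B : Fin L → Finset Ω}

theorem sum_numSingleBuckets (hB : ∀ i, #(B i) = M) (hk : 1 ≤ k) :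
    ∑ Y ∈ powersetCard k univ, numSingleBuckets B Y
      = L * (M * (Fintype.card Ω - M).choose (k - 1)) := by
  simp_rw [numSingleBuckets_eq_sum]
  rw [sum_comm]
  simp_rw [← card_filter, card_filter_card_inter_eq_one _ hk, hB]
  rw [sum_const, card_univ, Fintype.card_fin, smul_eq_mul]

theorem sum_numSingleBuckets_sq (hB : ∀ i, #(B i) = M) (hdisj : Pairwise (Disjoint on B))
    (hk : 2 ≤ k) :
    ∑ Y ∈ powersetCard k univ, numSingleBuckets B Y ^ 2
      = L * (M * (Fintype.card Ω - M).choose (k - 1))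
        + L * (L - 1) * (M * M * (Fintype.card Ω - 2 * M).choose (k - 2)) := by
  simp_rw [numSingleBuckets_eq_sum, sq, sum_mul_sum, ite_zero_mul_ite_zero, mul_one]
  rw [sum_comm]
  simp_rw [sum_comm (s := powersetCard k univ), ← card_filter]
  have hrow : ∀ i, ∑ j, #{Y ∈ powersetCard k univ | #(Y ∩ B i) = 1 ∧ #(Y ∩ B j) = 1}
      = M * (Fintype.card Ω - M).choose (k - 1)
        + (L - 1) * (M * M * (Fintype.card Ω - 2 * M).choose (k - 2)) := by
    intro i
    rw [← add_sum_erase _ _ (mem_univ i)]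
    simp_rw [and_self]
    rw [card_filter_card_inter_eq_one _ (by omega), hB,
      sum_congr rfl fun j hj => card_filter_card_inter_eq_one_and_eq_one
        (hdisj (ne_of_mem_erase hj).symm) hk]
    simp_rw [hB, ← two_mul]
    rw [sum_const, card_erase_of_mem (mem_univ i), card_univ, Fintype.card_fin, smul_eq_mul]
  rw [sum_congr rfl fun i _ => hrow i, sum_const, card_univ, Fintype.card_fin, smul_eq_mul]
  ring

end Counting

theorem cast_choose_sub_div_cast_choose {n k s : ℕ} (h : k + s ≤ n) :
    ((n - s).choose k : ℝ) / n.choose k = ∏ t ∈ range s, ((n : ℝ) - k - t) / (n - t) := by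
  induction s with
  | zero => simp [(Nat.choose_pos (by omega : k ≤ n)).ne']
  | succ s ih =>
    have hstep := Nat.choose_mul_succ_eq (n - (s + 1)) k
    rw [show n - (s + 1) + 1 = n - s by omega] at hstep
    have hstep' : ((n - (s + 1)).choose k : ℝ) * (n - s) = (n - s).choose k * (n - k - s) := by
      have := congrArg (Nat.cast (R := ℝ)) hstep
      push_cast [Nat.cast_sub (by omega : s ≤ n), Nat.cast_sub (by omega : k ≤ n - s)] at this
      linarith
    have hpos : (0 : ℝ) < n - s := by
      rw [sub_pos]
      exact_mod_cast (by omega : s < n)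
    rw [prod_range_succ, ← ih (by omega), div_mul_div_comm, ← hstep',
      mul_div_mul_right _ _ hpos.ne']

theorem exp_neg_one_le_one_sub_inv_pow (n : ℕ) : Real.exp (-1) ≤ (1 - ((n : ℝ) + 1)⁻¹) ^ n := by
  rcases n.eq_zero_or_pos with rfl | hn
  · simp
  have h : 1 - ((n : ℝ) + 1)⁻¹ = (1 + (n : ℝ)⁻¹)⁻¹ := by field_simp; ring
  rw [h, inv_pow, Real.exp_neg]
  exact inv_anti₀ (by positivity) Real.one_add_inv_pow_le_exp

noncomputable def singleBucketProb (L M : ℕ) : ℝ :=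
  M * ((L * M - M).choose (L - 1) : ℝ) / (L * M).choose L

section singleBucketProb

variable {L M t : ℕ}

theorem singleBucketProb_nonneg : 0 ≤ singleBucketProb L M := by
  unfold singleBucketProb
  positivity

theorem singleBucketProb_eq_prod (hL : 1 ≤ L) (hM : 1 ≤ M) :
    singleBucketProb L M = ∏ t ∈ range (M - 1), (1 - ((L : ℝ) - 1) / (L * M - 1 - t)) := by
  obtain ⟨n, hn⟩ : ∃ n, L * M = n + 1 := ⟨L * M - 1, by have := Nat.mul_le_mul hL hM; omega⟩
  have hsum : (L - 1) + (M - 1) ≤ n := by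
    zify [hL, hM] at hn ⊢
    nlinarith
  have hchoose : (n + 1).choose L = M * n.choose (L - 1) := by
    have hrec := Nat.add_one_mul_choose_eq n (L - 1)
    rw [Nat.sub_add_cancel hL] at hrec
    refine Nat.eq_of_mul_eq_mul_left hL ?_
    rw [← mul_assoc, hn, hrec, mul_comm]
  rw [singleBucketProb, hn, hchoose, show n + 1 - M = n - (M - 1) by omega, Nat.cast_mul,
    mul_div_mul_left _ _ (by positivity), cast_choose_sub_div_cast_choose hsum]
  refine prod_congr rfl fun t ht => ?_
  have ht : t + 1 < M := by have := mem_range.mp ht; omega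
  have hpos : (0 : ℝ) < n - t := by
    rw [sub_pos]
    exact_mod_cast (by omega : t < n)
  have hn' : (n : ℝ) = L * M - 1 := by
    rw [eq_sub_iff_add_eq]
    exact_mod_cast hn.symm
  rw [Nat.cast_sub hL, ← hn', Nat.cast_one]
  field_simp
  ring

theorem one_sub_inv_nonneg (hM : 1 ≤ M) : 0 ≤ 1 - (M : ℝ)⁻¹ :=
  sub_nonneg.mpr (inv_le_one_of_one_le₀ (by exact_mod_cast hM))

theorem one_sub_inv_le_one_sub_div (hL : 1 ≤ L) (ht : t + 1 < M) :
    1 - (M : ℝ)⁻¹ ≤ 1 - ((L : ℝ) - 1) / (L * M - 1 - t) := by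
  have hL' : (1 : ℝ) ≤ L := by exact_mod_cast hL
  have ht' : (t : ℝ) + 2 ≤ M := by exact_mod_cast ht
  rw [sub_le_sub_iff_left, div_le_iff₀ (by nlinarith), inv_mul_eq_div, le_div_iff₀ (by linarith)]
  linarith

theorem one_sub_div_le_one_sub_div (hL : 1 ≤ L) (ht : t + 1 < M) :
    1 - ((L : ℝ) - 1) / (L * M - 1 - t) ≤ 1 - ((L : ℝ) - 1) / (L * M) := by
  have hL' : (1 : ℝ) ≤ L := by exact_mod_cast hL
  have ht' : (t : ℝ) + 2 ≤ M := by exact_mod_cast ht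
  rw [sub_le_sub_iff_left]
  exact div_le_div_of_nonneg_left (by linarith) (by nlinarith) (by linarith)

theorem one_sub_inv_pow_le_singleBucketProb (hL : 1 ≤ L) (hM : 1 ≤ M) :
    (1 - (M : ℝ)⁻¹) ^ (M - 1) ≤ singleBucketProb L M := calc
  _ = ∏ _t ∈ range (M - 1), (1 - (M : ℝ)⁻¹) := by rw [prod_const, card_range]
  _ ≤ _ := by
    rw [singleBucketProb_eq_prod hL hM]
    refine prod_le_prod (fun _ _ => one_sub_inv_nonneg hM) fun t ht => ?_
    exact one_sub_inv_le_one_sub_div hL (by have := mem_range.mp ht; omega)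

theorem singleBucketProb_le_pow (hL : 1 ≤ L) (hM : 1 ≤ M) :
    singleBucketProb L M ≤ (1 - ((L : ℝ) - 1) / (L * M)) ^ (M - 1) := calc
  _ ≤ ∏ _t ∈ range (M - 1), (1 - ((L : ℝ) - 1) / (L * M)) := by
    rw [singleBucketProb_eq_prod hL hM]
    refine prod_le_prod (fun t ht => ?_) fun t ht => ?_ <;>
      have ht : t + 1 < M := by have := mem_range.mp ht; omega
    · exact (one_sub_inv_nonneg hM).trans (one_sub_inv_le_one_sub_div hL ht)
    · exact one_sub_div_le_one_sub_div hL ht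
  _ = _ := by rw [prod_const, card_range]

theorem exp_neg_one_le_singleBucketProb (hL : 1 ≤ L) (hM : 1 ≤ M) :
    Real.exp (-1) ≤ singleBucketProb L M := by
  have h := exp_neg_one_le_one_sub_inv_pow (M - 1)
  rw [← Nat.cast_add_one, Nat.sub_add_cancel hM] at h
  exact h.trans (one_sub_inv_pow_le_singleBucketProb hL hM)

theorem singleBucketProb_le_one (hL : 1 ≤ L) (hM : 1 ≤ M) : singleBucketProb L M ≤ 1 := by
  have hL' : (1 : ℝ) ≤ L := by exact_mod_cast hL
  have hM' : (1 : ℝ) ≤ M := by exact_mod_cast hM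
  refine (singleBucketProb_le_pow hL hM).trans (pow_le_one₀ ?_ ?_)
  · rw [sub_nonneg, div_le_one (by positivity)]
    nlinarith
  · rw [sub_le_self_iff]
    positivity

theorem mul_singleBucketProb_sub_singleBucketProb_succ_le (hL : 1 ≤ L) (hM : 1 ≤ M) :
    (L : ℝ) * (singleBucketProb L M - singleBucketProb (L + 1) M) ≤ 1 := by
  have hL' : (1 : ℝ) ≤ L := by exact_mod_cast hL
  have hM' : (1 : ℝ) ≤ M := by exact_mod_cast hM
  set u : ℝ := 1 - ((L : ℝ) - 1) / (L * M)
  set v : ℝ := 1 - (M : ℝ)⁻¹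
  have huv : u - v = 1 / (L * M) := by simp only [u, v]; field_simp; ring
  have hv : 0 ≤ v := one_sub_inv_nonneg hM
  have hu : u ≤ 1 := by simp only [u, sub_le_self_iff]; positivity
  have hvu : v ≤ u := by rw [← sub_nonneg, huv]; positivity
  have hpow : u ^ (M - 1) - v ^ (M - 1) ≤ 1 / (L * M) * (M - 1) := calc
    _ ≤ |u - v| * (M - 1 : ℕ) * max |u| |v| ^ (M - 1 - 1) :=
      (le_abs_self _).trans (abs_pow_sub_pow_le _ _ _)
    _ ≤ 1 / (L * M) * (M - 1) * 1 := by
      rw [abs_of_nonneg (hv.trans hvu), abs_of_nonneg hv, max_eq_left hvu,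
        abs_of_nonneg (sub_nonneg.mpr hvu), huv, Nat.cast_sub hM, Nat.cast_one]
      gcongr
      exact pow_le_one₀ (hv.trans hvu) hu
    _ = _ := mul_one _
  calc (L : ℝ) * (singleBucketProb L M - singleBucketProb (L + 1) M)
      ≤ L * (u ^ (M - 1) - v ^ (M - 1)) := by
        gcongr
        exacts [singleBucketProb_le_pow hL hM,
          one_sub_inv_pow_le_singleBucketProb (by omega) hM]
    _ ≤ L * (1 / (L * M) * (M - 1)) := by gcongr
    _ ≤ 1 := by
        rw [← mul_assoc, mul_one_div, div_mul_eq_mul_div, div_le_one (by positivity)]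
        nlinarith

theorem cast_mul_choose_div_eq_singleBucketProb_mul (hL : 2 ≤ L) (hM : 1 ≤ M) :
    ((M * M * (L * M - 2 * M).choose (L - 2) : ℕ) : ℝ) / (L * M).choose L
      = singleBucketProb L M * singleBucketProb (L - 1) M := by
  have h₁ : (L - 1) * M = L * M - M := Nat.sub_one_mul L M
  have h₂ : L * M - M - M = L * M - 2 * M := by omega
  have hC : ((L * M - M).choose (L - 1) : ℝ) ≠ 0 := by
    have : L - 1 ≤ L * M - M := by rw [← h₁]; exact Nat.le_mul_of_pos_right _ (by omega)
    exact_mod_cast (Nat.choose_pos this).ne'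
  rw [singleBucketProb, singleBucketProb, h₁, h₂, show L - 1 - 1 = L - 2 by omega]
  push_cast
  field_simp

end singleBucketProb

theorem card_filter_not_le_mul_sq_le_sum_sq {ι : Type*} (s : Finset ι) (f : ι → ℝ) {a c : ℝ}
    (hac : a ≤ c) : #{i ∈ s | ¬ a ≤ f i} * (c - a) ^ 2 ≤ ∑ i ∈ s, (f i - c) ^ 2 := by
  rw [← nsmul_eq_mul]
  refine (card_nsmul_le_sum _ _ _ fun i hi => ?_).trans
    (sum_le_sum_of_subset_of_nonneg (filter_subset _ s) fun _ _ _ => sq_nonneg _)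
  have := (mem_filter.mp hi).2
  nlinarith

theorem cast_card_powersetCard_univ {Ω : Type*} [Fintype Ω] {L M : ℕ}
    (hΩ : Fintype.card Ω = L * M) :
    (#(powersetCard L (univ : Finset Ω)) : ℝ) = (L * M).choose L := by
  rw [card_powersetCard, card_univ, hΩ]

section Variance

variable {Ω : Type*} [Fintype Ω] [DecidableEq Ω] {L M : ℕ} {B : Fin L → Finset Ω}

theorem sum_numSingleBuckets_eq_mul_singleBucketProb (hL : 1 ≤ L) (hM : 1 ≤ M)
    (hΩ : Fintype.card Ω = L * M) (hB : ∀ i, #(B i) = M) :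
    ∑ Y ∈ powersetCard L univ, (numSingleBuckets B Y : ℝ)
      = #(powersetCard L (univ : Finset Ω)) * (L * singleBucketProb L M) := by
  have hN : ((L * M).choose L : ℝ) ≠ 0 :=
    mod_cast (Nat.choose_pos (Nat.le_mul_of_pos_right _ hM)).ne'
  have h := congrArg (Nat.cast (R := ℝ)) (sum_numSingleBuckets hB hL)
  rw [hΩ] at h
  push_cast at h
  rw [h, cast_card_powersetCard_univ hΩ, singleBucketProb]
  field_simp

theorem sum_numSingleBuckets_sq_eq_mul_singleBucketProb (hL : 2 ≤ L) (hM : 1 ≤ M)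
    (hΩ : Fintype.card Ω = L * M) (hB : ∀ i, #(B i) = M) (hdisj : Pairwise (Disjoint on B)) :
    ∑ Y ∈ powersetCard L univ, (numSingleBuckets B Y : ℝ) ^ 2
      = #(powersetCard L (univ : Finset Ω)) * (L * singleBucketProb L M
          + L * (L - 1) * (singleBucketProb L M * singleBucketProb (L - 1) M)) := by
  have hN : ((L * M).choose L : ℝ) ≠ 0 :=
    mod_cast (Nat.choose_pos (Nat.le_mul_of_pos_right _ hM)).ne'
  have h := congrArg (Nat.cast (R := ℝ)) (sum_numSingleBuckets_sq hB hdisj hL)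
  rw [hΩ] at h
  push_cast [Nat.cast_sub (by omega : 1 ≤ L)] at h
  rw [h, cast_card_powersetCard_univ hΩ, ← cast_mul_choose_div_eq_singleBucketProb_mul hL hM,
    singleBucketProb]
  push_cast
  field_simp

theorem sum_sq_numSingleBuckets_sub_le (hL : 2 ≤ L) (hM : 1 ≤ M) (hΩ : Fintype.card Ω = L * M)
    (hB : ∀ i, #(B i) = M) (hdisj : Pairwise (Disjoint on B)) :
    ∑ Y ∈ powersetCard L univ, ((numSingleBuckets B Y : ℝ) - L * singleBucketProb L M) ^ 2
      ≤ #(powersetCard L (univ : Finset Ω)) * (2 * L) := by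
  set P := powersetCard L (univ : Finset Ω)
  set S : Finset Ω → ℝ := fun Y => numSingleBuckets B Y
  set p := singleBucketProb L M
  set q := singleBucketProb (L - 1) M
  have hp0 : 0 ≤ p := singleBucketProb_nonneg
  have hp1 : p ≤ 1 := singleBucketProb_le_one (by omega) hM
  have hqp : ((L : ℝ) - 1) * (q - p) ≤ 1 := by
    have h := mul_singleBucketProb_sub_singleBucketProb_succ_le (L := L - 1) (by omega) hM
    rwa [Nat.sub_add_cancel (by omega), Nat.cast_sub (by omega), Nat.cast_one] at h
  have hexp : ∑ Y ∈ P, (S Y - L * p) ^ 2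
      = ∑ Y ∈ P, S Y ^ 2 - 2 * (L * p) * ∑ Y ∈ P, S Y + #P * (L * p) ^ 2 := by
    rw [← sum_congr rfl fun Y _ => (by ring : S Y ^ 2 - 2 * (L * p) * S Y + (L * p) ^ 2 = _),
      sum_add_distrib, sum_sub_distrib, ← mul_sum, sum_const, nsmul_eq_mul]
  rw [hexp, sum_numSingleBuckets_eq_mul_singleBucketProb (by omega) hM hΩ hB,
    sum_numSingleBuckets_sq_eq_mul_singleBucketProb hL hM hΩ hB hdisj]
  calc (#P : ℝ) * (L * p + L * (L - 1) * (p * q)) - 2 * (L * p) * (#P * (L * p))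
        + #P * (L * p) ^ 2
      = #P * L * (p * (1 - p + (L - 1) * (q - p))) := by ring
    _ ≤ #P * L * 2 := by gcongr; nlinarith
    _ = #P * (2 * L) := by ring

theorem one_sub_div_le_card_filter_numSingleBuckets_div (hL : 2 ≤ L) (hM : 1 ≤ M)
    (hΩ : Fintype.card Ω = L * M) (hB : ∀ i, #(B i) = M) (hdisj : Pairwise (Disjoint on B)) :
    1 - 1800 / (L : ℝ) ≤
      #{Y ∈ powersetCard L univ | (L : ℝ) / 3 ≤ numSingleBuckets B Y}
        / (#(powersetCard L (univ : Finset Ω)) : ℝ) := by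
  set P := powersetCard L (univ : Finset Ω)
  set S : Finset Ω → ℝ := fun Y => numSingleBuckets B Y
  set p := singleBucketProb L M
  have hP : (0 : ℝ) < #P := by
    rw [cast_card_powersetCard_univ hΩ]
    exact_mod_cast Nat.choose_pos (Nat.le_mul_of_pos_right _ hM)
  -- `11 / 30 < e⁻¹ ≤ p`, so every `Y` with `S Y < L / 3` lies at distance `≥ L / 30` from `L p`.
  have hp : 11 / 30 ≤ p := le_trans (by norm_num)
    (Real.exp_neg_one_gt_d9.le.trans (exp_neg_one_le_singleBucketProb (by omega) hM))
  have hgap : (L : ℝ) / 30 ≤ L * p - L / 3 := by nlinarith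
  have hbad : #{Y ∈ P | ¬ (L : ℝ) / 3 ≤ S Y} * (L : ℝ) ≤ 1800 * #P := by
    have h := (card_filter_not_le_mul_sq_le_sum_sq P S (a := L / 3) (by linarith)).trans
      (sum_sq_numSingleBuckets_sub_le hL hM hΩ hB hdisj)
    have h' := (mul_le_mul_of_nonneg_left (pow_le_pow_left₀ (by positivity) hgap 2)
      (Nat.cast_nonneg _)).trans h
    nlinarith
  have hgood : (#{Y ∈ P | (L : ℝ) / 3 ≤ S Y} : ℝ) = #P - #{Y ∈ P | ¬ (L : ℝ) / 3 ≤ S Y} := by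
    rw [← card_filter_add_card_filter_not (s := P) (fun Y => (L : ℝ) / 3 ≤ S Y)]
    push_cast
    ring
  change 1 - 1800 / (L : ℝ) ≤ #{Y ∈ P | (L : ℝ) / 3 ≤ S Y} / #P
  rw [le_div_iff₀ hP, hgood, sub_mul, one_mul, div_mul_eq_mul_div, sub_le_sub_iff_left,
    le_div_iff₀ (by positivity)]
  exact hbad

end Variance

open scoped Classical in
theorem stmt_15_general (l m : ℕ → ℕ) (hmpos : ∀ n, 0 < m n)
    (hl : Tendsto l atTop atTop)
    (B : ∀ n, Fin (l n) → Finset (Fin (l n * m n)))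
    (hdisj : ∀ n, ∀ i j, i ≠ j → Disjoint (B n i) (B n j))
    (hBcard : ∀ n i, (B n i).card = m n) :
    -- P[at least lₙ/3 buckets contain exactly one element of Yₙ] → 1,
    -- for Yₙ a uniformly random lₙ-element subset
    Tendsto (fun n =>
        (((((Finset.univ : Finset (Fin (l n * m n))).powersetCard (l n)).filter
            (fun Y => (l n : ℝ) / 3 ≤ (numSingleBuckets (B n) Y : ℝ))).card : ℝ))
          / ((((Finset.univ : Finset (Fin (l n * m n))).powersetCard (l n)).card : ℝ)))
      atTop (nhds 1) := by
  have hlower : Tendsto (fun n => 1 - 1800 / (l n : ℝ)) atTop (nhds 1) := by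
    simpa using (tendsto_const_nhds (x := (1 : ℝ))).sub
      (tendsto_const_nhds.div_atTop (tendsto_natCast_atTop_atTop.comp hl))
  refine tendsto_of_tendsto_of_tendsto_of_le_of_le' hlower tendsto_const_nhds ?_
    (Eventually.of_forall fun n => ?_)
  · filter_upwards [hl.eventually_ge_atTop 2] with n hn
    exact one_sub_div_le_card_filter_numSingleBuckets_div hn (hmpos n) (Fintype.card_fin _)
      (hBcard n) (fun i j => hdisj n i j)
  · exact div_le_one_of_le₀ (mod_cast card_le_card (filter_subset _ _)) (Nat.cast_nonneg _)

open scoped Classical in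
theorem stmt_15 (l m : ℕ → ℕ) (hlpos : ∀ n, 0 < l n) (hmpos : ∀ n, 0 < m n)
    (hl : Tendsto l atTop atTop) (hm : Tendsto m atTop atTop)
    (B : ∀ n, Fin (l n) → Finset (Fin (l n * m n)))
    (hdisj : ∀ n, ∀ i j, i ≠ j → Disjoint (B n i) (B n j))
    (hcover : ∀ n, ∀ x, ∃ i, x ∈ B n i)
    (hBcard : ∀ n i, (B n i).card = m n) :
    -- P[at least lₙ/3 buckets contain exactly one element of Yₙ] → 1,
    -- for Yₙ a uniformly random lₙ-element subset
    Tendsto (fun n =>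
        (((((Finset.univ : Finset (Fin (l n * m n))).powersetCard (l n)).filter
            (fun Y => (l n : ℝ) / 3 ≤ (numSingleBuckets (B n) Y : ℝ))).card : ℝ))
          / ((((Finset.univ : Finset (Fin (l n * m n))).powersetCard (l n)).card : ℝ)))
      atTop (nhds 1) :=
  stmt_15_general l m hmpos hl B hdisj hBcard
end
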